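/- arXiv:2409.04197 — 2 statements merged into one kernel-verified Lean document; each statement's English description precedes it below -/
import Mathlib

section
/- Let κ > 0, η > 0, ς ∈ (0, 2η), and let x, N ∈ ℝ^N with ‖N‖ = 1. Suppose F ∈ ℝ^N satisfies ⟨F − x, N⟩ < −ς/2 and ‖F − (x + (1/κ)N)‖ < η + 1/κ. Then for every t ∈ (ς/2, η), ‖F − (x − tN)‖² < η² + 2η/κ − ς/κ − tς + t², and consequently ‖F − (x − tN)‖ < √(2η² + (2/κ − ς)η − ς/κ). -/
/-!
Expanding `‖(F - x) - κ⁻¹ N‖² < (η + κ⁻¹)²` and using `⟪F - x, N⟫ < -ς/2` bounds `‖F - x‖²`;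
expanding `‖(F - x) + t N‖²` with the same inner product bound gives the first estimate, and the
second follows because `t² - tς < η² - ης` for `ς/2 < t < η`.
-/

open RealInnerProductSpace

section UnitVector

variable {E : Type*} [NormedAddCommGroup E] [InnerProductSpace ℝ E] {v N : E}

lemma norm_add_smul_sq_of_norm_eq_one (hN : ‖N‖ = 1) (a : ℝ) :
    ‖v + a • N‖ ^ 2 = ‖v‖ ^ 2 + 2 * a * ⟪v, N⟫ + a ^ 2 := by
  rw [norm_add_sq_real, real_inner_smul_right, norm_smul, mul_pow, hN, Real.norm_eq_abs, sq_abs]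
  ring

lemma norm_sq_lt_of_norm_sub_smul_lt (hN : ‖N‖ = 1) {r R s : ℝ} (hr : 0 < r)
    (hinner : ⟪v, N⟫ < -s / 2) (hball : ‖v - r • N‖ < R + r) :
    ‖v‖ ^ 2 < R ^ 2 + 2 * R * r - s * r := by
  have hsq : ‖v - r • N‖ ^ 2 < (R + r) ^ 2 := pow_lt_pow_left₀ hball (norm_nonneg _) two_ne_zero
  rw [sub_eq_add_neg, ← neg_smul, norm_add_smul_sq_of_norm_eq_one hN] at hsq
  nlinarith [mul_lt_mul_of_pos_left hinner hr]

lemma norm_add_smul_sq_lt (hN : ‖N‖ = 1) {a c s : ℝ} (ha : 0 < a)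
    (hinner : ⟪v, N⟫ < -s / 2) (hv : ‖v‖ ^ 2 < c) :
    ‖v + a • N‖ ^ 2 < c - a * s + a ^ 2 := by
  rw [norm_add_smul_sq_of_norm_eq_one hN]
  nlinarith [mul_lt_mul_of_pos_left hinner ha]

end UnitVector

theorem strongly_convex_distance_estimate_general
    {E : Type*} [NormedAddCommGroup E] [InnerProductSpace ℝ E]
    (κ η ς : ℝ) (hκ : 0 < κ) (hς : ς ∈ Set.Ioo 0 (2 * η))
    (x N F : E) (hN : ‖N‖ = 1)
    (h1 : ⟪F - x, N⟫ < -ς / 2)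
    (h2 : ‖F - (x + (1 / κ) • N)‖ < η + 1 / κ) :
    ∀ t ∈ Set.Ioo (ς / 2) η,
      ‖F - (x - t • N)‖ ^ 2 < η ^ 2 + 2 * η / κ - ς / κ - t * ς + t ^ 2 ∧
      ‖F - (x - t • N)‖ < Real.sqrt (2 * η ^ 2 + (2 / κ - ς) * η - ς / κ) := by
  rintro t ⟨hςt, htη⟩
  have hFx : ‖F - x‖ ^ 2 < η ^ 2 + 2 * η / κ - ς / κ := by
    rw [← sub_sub] at h2
    convert norm_sq_lt_of_norm_sub_smul_lt hN (one_div_pos.2 hκ) h1 h2 using 1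
    ring
  have hsq : ‖F - (x - t • N)‖ ^ 2 < η ^ 2 + 2 * η / κ - ς / κ - t * ς + t ^ 2 := by
    rw [sub_sub_eq_add_sub, add_sub_right_comm]
    exact norm_add_smul_sq_lt hN (by linarith [hς.1]) h1 hFx
  refine ⟨hsq, (Real.lt_sqrt (norm_nonneg _)).2 ?_⟩
  have hfactor : (2 / κ - ς) * η = 2 * η / κ - ς * η := by ring
  linarith [mul_pos (sub_pos.2 htη) (show 0 < η + t - ς by linarith)]

/-- The key Euclidean estimate near the boundary of a strongly convex domain:
if `⟨F − x, N⟩ < −ς/2` and `‖F − (x + (1/κ)N)‖ < η + 1/κ` with `‖N‖ = 1`, then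
for every `t ∈ (ς/2, η)`,
`‖F − (x − tN)‖² < η² + 2η/κ − ς/κ − tς + t²`, and consequently
`‖F − (x − tN)‖ < √(2η² + (2/κ − ς)η − ς/κ)`. -/
theorem strongly_convex_distance_estimate
    {E : Type*} [NormedAddCommGroup E] [InnerProductSpace ℝ E]
    (κ η ς : ℝ) (hκ : 0 < κ) (hη : 0 < η) (hς : ς ∈ Set.Ioo 0 (2 * η))
    (x N F : E) (hN : ‖N‖ = 1)
    (h1 : ⟪F - x, N⟫ < -ς / 2)
    (h2 : ‖F - (x + (1 / κ) • N)‖ < η + 1 / κ) :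
    ∀ t ∈ Set.Ioo (ς / 2) η,
      ‖F - (x - t • N)‖ ^ 2 < η ^ 2 + 2 * η / κ - ς / κ - t * ς + t ^ 2 ∧
      ‖F - (x - t • N)‖ < Real.sqrt (2 * η ^ 2 + (2 / κ - ς) * η - ς / κ) :=
  strongly_convex_distance_estimate_general κ η ς hκ hς x N F hN h1 h2
end

section
/- Let M be a compact metric space, ℂ^N the target, and fⱼ: M → ℂ^N a sequence of continuous maps converging uniformly to F. Suppose for each j, ςⱼ := (1/(2j²))·inf{‖f_{j−1}(p) − f_{j−1}(q)‖ : p,q ∈ M, dist(p,q) > 1/j} > 0 and ‖fⱼ − f_{j−1}‖_{0,M} < ςⱼ. Then F is injective on the set where all fⱼ are defined; more precisely, for any distinct p, q ∈ M there is j₀ with dist(p,q) > 1/j₀ and ‖F(p) − F(q)‖ ≥ (∏_{j≥j₀}(1 − 1/j²))·‖f_{j₀}(p) − f_{j₀}(q)‖ > 0. -/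
open Filter Topology

section Aux

private lemma aux_term_pos (m : ℕ) (hm : 2 ≤ m) (k : ℕ) :
    0 < 1 - 1 / (((k + m : ℕ)) : ℝ) ^ 2 := by
  have h2 : (2 : ℝ) ≤ ((k + m : ℕ) : ℝ) := by
    have : 2 ≤ k + m := le_add_of_le_right hm
    exact_mod_cast this
  have h4 : (4 : ℝ) ≤ ((k + m : ℕ) : ℝ) ^ 2 := by nlinarith
  have : 1 / (((k + m : ℕ)) : ℝ) ^ 2 ≤ 1 / 4 :=
    one_div_le_one_div_of_le (by norm_num) h4
  linarith

private lemma aux_prod_closed (m : ℕ) (hm : 2 ≤ m) (k : ℕ) :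
    ∏ i ∈ Finset.range k, (1 - 1 / (((i + m : ℕ)) : ℝ) ^ 2)
      = ((m : ℝ) - 1) / m * (((m : ℝ) + k) / ((m : ℝ) + k - 1)) := by
  have hm' : (2 : ℝ) ≤ (m : ℝ) := by exact_mod_cast hm
  induction k with
  | zero =>
    have h1 : (m : ℝ) ≠ 0 := by linarith
    have h2 : (m : ℝ) - 1 ≠ 0 := by linarith
    rw [Finset.prod_range_zero]
    simp only [Nat.cast_zero, add_zero]
    field_simp
  | succ k ih =>
    rw [Finset.prod_range_succ, ih]
    have hk : (0 : ℝ) ≤ (k : ℝ) := Nat.cast_nonneg k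
    have h1 : (m : ℝ) ≠ 0 := by linarith
    have h2 : (m : ℝ) + k - 1 ≠ 0 := by linarith
    have h3 : ((k + m : ℕ) : ℝ) ≠ 0 := by push_cast; linarith
    have h4 : (m : ℝ) + (k + 1) - 1 ≠ 0 := by linarith
    push_cast at h3 h4 ⊢
    field_simp
    ring

private lemma aux_multipliable (m : ℕ) (hm : 2 ≤ m) :
    Multipliable (fun k : ℕ => 1 - 1 / (((k + m : ℕ)) : ℝ) ^ 2) := by
  have hpos := aux_term_pos m hm
  have hsum2 : Summable (fun k : ℕ => 2 * (1 / (((k + m : ℕ)) : ℝ) ^ 2)) := by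
    have h0 : Summable (fun n : ℕ => 1 / (n : ℝ) ^ 2) :=
      Real.summable_one_div_nat_pow.mpr (by norm_num)
    exact ((summable_nat_add_iff m).mpr h0).mul_left 2
  have hlogsum : Summable (fun k : ℕ => - Real.log (1 - 1 / (((k + m : ℕ)) : ℝ) ^ 2)) := by
    apply Summable.of_nonneg_of_le _ _ hsum2
    · intro k
      have hx : 0 ≤ 1 / (((k + m : ℕ)) : ℝ) ^ 2 := by positivity
      have h1 : (1 : ℝ) - 1 / (((k + m : ℕ)) : ℝ) ^ 2 ≤ 1 := by linarith
      have := Real.log_nonpos (le_of_lt (hpos k)) h1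
      linarith
    · intro k
      set x : ℝ := 1 / (((k + m : ℕ)) : ℝ) ^ 2 with hxdef
      set y : ℝ := 1 - x with hydef
      have hy : 0 < y := hpos k
      have hx : 0 ≤ x := by positivity
      have hx4 : x ≤ 1 / 4 := by
        have h2 : (2 : ℝ) ≤ ((k + m : ℕ) : ℝ) := by
          have : 2 ≤ k + m := le_add_of_le_right hm
          exact_mod_cast this
        have h4 : (4 : ℝ) ≤ ((k + m : ℕ) : ℝ) ^ 2 := by nlinarith
        exact one_div_le_one_div_of_le (by norm_num) h4
      have hlog : Real.log y⁻¹ ≤ y⁻¹ - 1 :=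
        Real.log_le_sub_one_of_pos (inv_pos.mpr hy)
      rw [Real.log_inv] at hlog
      have hinv : y⁻¹ ≤ 1 + 2 * x := by
        rw [inv_le_iff_one_le_mul₀ hy]
        nlinarith
      have : -Real.log y ≤ 2 * x := by linarith
      linarith
  have hlogsum' : Summable (fun k : ℕ => Real.log (1 - 1 / (((k + m : ℕ)) : ℝ) ^ 2)) := by
    have := hlogsum.neg
    simpa using this
  exact Real.multipliable_of_summable_log hpos hlogsum'

private lemma aux_tprod_eq (m : ℕ) (hm : 2 ≤ m) :
    (∏' k : ℕ, (1 - 1 / (((k + m : ℕ)) : ℝ) ^ 2)) = ((m : ℝ) - 1) / m := by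
  have hm' : (2 : ℝ) ≤ (m : ℝ) := by exact_mod_cast hm
  have hmul := aux_multipliable m hm
  have h1 := hmul.hasProd.tendsto_prod_nat
  have h1' : Tendsto (fun n : ℕ => ((m : ℝ) - 1) / m * (((m : ℝ) + n) / ((m : ℝ) + n - 1)))
      atTop (𝓝 (∏' k : ℕ, (1 - 1 / (((k + m : ℕ)) : ℝ) ^ 2))) := by
    apply h1.congr
    intro n
    exact aux_prod_closed m hm n
  have h2 : Tendsto (fun n : ℕ => ((m : ℝ) - 1) / m * (((m : ℝ) + n) / ((m : ℝ) + n - 1)))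
      atTop (𝓝 (((m : ℝ) - 1) / m)) := by
    have hbase : Tendsto (fun n : ℕ => (m : ℝ) + n - 1) atTop atTop := by
      have := tendsto_natCast_atTop_atTop (R := ℝ)
      exact tendsto_atTop_add_const_right _ (-1) (tendsto_atTop_add_const_left _ _ this)
    have hinv : Tendsto (fun n : ℕ => ((m : ℝ) + n - 1)⁻¹) atTop (𝓝 0) :=
      hbase.inv_tendsto_atTop
    have heq : ∀ n : ℕ, ((m : ℝ) - 1) / m * (((m : ℝ) + n) / ((m : ℝ) + n - 1))
        = ((m : ℝ) - 1) / m * (1 + ((m : ℝ) + n - 1)⁻¹) := by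
      intro n
      have hk : (0 : ℝ) ≤ (n : ℝ) := Nat.cast_nonneg n
      have h2 : (m : ℝ) + n - 1 ≠ 0 := by linarith
      field_simp
      ring
    have h2' := (((tendsto_const_nhds (x := (1 : ℝ))).add hinv)).const_mul (((m : ℝ) - 1) / m)
    simp only [add_zero, mul_one] at h2'
    exact h2'.congr fun n => (heq n).symm
  exact tendsto_nhds_unique h1' h2

end Aux

/-- Injectivity preservation: if each step of an inductive construction perturbs
the map by less than the quantified fraction
`ςⱼ = (1/(2j²))·inf{‖f_{j−1}(p) − f_{j−1}(q)‖ : dist(p,q) > 1/j}` of the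
separation modulus of the previous map, then the uniform limit `F` is
injective; quantitatively, for distinct `p, q` there is `j₀ ≥ 1` with
`dist(p,q) > 1/j₀` and
`‖F(p) − F(q)‖ ≥ (∏_{j≥j₀}(1 − 1/j²))·‖f_{j₀}(p) − f_{j₀}(q)‖ > 0`. -/
theorem injective_limit (M : Type*) [MetricSpace M] [CompactSpace M] (N : ℕ)
    (f : ℕ → M → EuclideanSpace ℂ (Fin N)) (F : M → EuclideanSpace ℂ (Fin N))
    (hconv : TendstoUniformly f F atTop)
    (ς : ℕ → ℝ)
    (hςdef : ∀ j : ℕ, 1 ≤ j →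
      ς j = (1 / (2 * (j : ℝ) ^ 2)) *
        sInf {r : ℝ | ∃ p q : M, dist p q > 1 / (j : ℝ) ∧ r = ‖f (j - 1) p - f (j - 1) q‖})
    (hςpos : ∀ j : ℕ, 1 ≤ j → 0 < ς j)
    (hclose : ∀ j : ℕ, 1 ≤ j → ∀ p : M, ‖f j p - f (j - 1) p‖ < ς j) :
    Function.Injective F ∧
      ∀ p q : M, p ≠ q →
        ∃ j₀ : ℕ, 1 ≤ j₀ ∧ dist p q > 1 / (j₀ : ℝ) ∧
          ‖F p - F q‖ ≥
            (∏' k : ℕ, (1 - 1 / ((k + j₀ : ℕ) : ℝ) ^ 2)) * ‖f j₀ p - f j₀ q‖ ∧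
          0 < ‖F p - F q‖ := by
  have main : ∀ p q : M, p ≠ q →
      ∃ j₀ : ℕ, 1 ≤ j₀ ∧ dist p q > 1 / (j₀ : ℝ) ∧
        ‖F p - F q‖ ≥
          (∏' k : ℕ, (1 - 1 / ((k + j₀ : ℕ) : ℝ) ^ 2)) * ‖f j₀ p - f j₀ q‖ ∧
        0 < ‖F p - F q‖ := by
    intro p q hpq
    have hd0 : 0 < dist p q := dist_pos.mpr hpq
    obtain ⟨n, hn⟩ := exists_nat_one_div_lt hd0
    set j₀ : ℕ := max (n + 1) 2 with hj₀def
    have hj₀2 : 2 ≤ j₀ := le_max_right _ _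
    have hj₀1 : 1 ≤ j₀ := le_trans (by norm_num) hj₀2
    have hc2 : (2 : ℝ) ≤ (j₀ : ℝ) := by exact_mod_cast hj₀2
    have hdist : dist p q > 1 / (j₀ : ℝ) := by
      have hle : (n + 1 : ℕ) ≤ j₀ := le_max_left _ _
      have hle' : ((n : ℝ) + 1) ≤ (j₀ : ℝ) := by exact_mod_cast hle
      have : 1 / (j₀ : ℝ) ≤ 1 / ((n : ℝ) + 1) :=
        one_div_le_one_div_of_le (by positivity) hle'
      linarith
    set d : ℕ → ℝ := fun j => ‖f j p - f j q‖ with hddef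
    -- separation lower bound from sInf
    have hsep : ∀ j : ℕ, j₀ ≤ j → ς (j + 1) ≤ (1 / (2 * ((j + 1 : ℕ) : ℝ) ^ 2)) * d j ∧
        2 * ((j + 1 : ℕ) : ℝ) ^ 2 * ς (j + 1) ≤ d j := by
      intro j hj
      have hj1 : 1 ≤ j + 1 := Nat.le_add_left _ _
      have hJpos : (0 : ℝ) < ((j + 1 : ℕ) : ℝ) := by positivity
      set S : Set ℝ := {r : ℝ | ∃ p' q' : M, dist p' q' > 1 / ((j + 1 : ℕ) : ℝ) ∧
        r = ‖f ((j + 1) - 1) p' - f ((j + 1) - 1) q'‖} with hSdef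
      have hmem : d j ∈ S := by
        refine ⟨p, q, ?_, by simp [hddef]⟩
        have hjc : (j₀ : ℝ) ≤ ((j + 1 : ℕ) : ℝ) := by
          exact_mod_cast le_trans hj (Nat.le_succ j)
        have : 1 / ((j + 1 : ℕ) : ℝ) ≤ 1 / (j₀ : ℝ) :=
          one_div_le_one_div_of_le (by linarith) hjc
        linarith
      have hbdd : BddBelow S := by
        refine ⟨0, ?_⟩
        rintro r ⟨p', q', -, rfl⟩
        exact norm_nonneg _
      have hinf : sInf S ≤ d j := csInf_le hbdd hmem
      have hςeq := hςdef (j + 1) hj1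
      constructor
      · rw [hςeq]
        apply mul_le_mul_of_nonneg_left hinf
        positivity
      · rw [hςeq]
        have h2 : 2 * ((j + 1 : ℕ) : ℝ) ^ 2 * ((1 / (2 * ((j + 1 : ℕ) : ℝ) ^ 2)) * sInf S)
            = sInf S := by field_simp
        rw [h2]
        exact hinf
    -- positivity of d j₀
    have hdpos : 0 < d j₀ := by
      obtain ⟨-, h2⟩ := hsep j₀ le_rfl
      have hς := hςpos (j₀ + 1) (Nat.le_add_left _ _)
      have hJ2 : (0 : ℝ) < ((j₀ + 1 : ℕ) : ℝ) ^ 2 := by positivity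
      nlinarith [mul_pos hJ2 hς]
    -- one step estimate
    have hstep : ∀ j : ℕ, j₀ ≤ j → (1 - 1 / ((j + 1 : ℕ) : ℝ) ^ 2) * d j ≤ d (j + 1) := by
      intro j hj
      obtain ⟨h1, -⟩ := hsep j hj
      have hj1 : 1 ≤ j + 1 := Nat.le_add_left _ _
      have hp' := hclose (j + 1) hj1 p
      have hq' := hclose (j + 1) hj1 q
      simp only [Nat.add_sub_cancel] at hp' hq'
      have htri : d j ≤ d (j + 1) + ‖f (j + 1) p - f j p‖ + ‖f (j + 1) q - f j q‖ := by
        have hrw : f j p - f j q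
            = (f (j + 1) p - f (j + 1) q) - (f (j + 1) p - f j p) + (f (j + 1) q - f j q) := by
          abel
        calc d j = ‖(f (j + 1) p - f (j + 1) q) - (f (j + 1) p - f j p) + (f (j + 1) q - f j q)‖ := by
              show ‖f j p - f j q‖ = _; rw [hrw]
          _ ≤ ‖(f (j + 1) p - f (j + 1) q) - (f (j + 1) p - f j p)‖ + ‖f (j + 1) q - f j q‖ :=
              norm_add_le _ _
          _ ≤ ‖f (j + 1) p - f (j + 1) q‖ + ‖f (j + 1) p - f j p‖ + ‖f (j + 1) q - f j q‖ := by
              have := norm_sub_le (f (j + 1) p - f (j + 1) q) (f (j + 1) p - f j p)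
              linarith
          _ = d (j + 1) + ‖f (j + 1) p - f j p‖ + ‖f (j + 1) q - f j q‖ := rfl
      have hJpos : (0 : ℝ) < ((j + 1 : ℕ) : ℝ) := by positivity
      have hd2 : d j - 2 * ς (j + 1) ≤ d (j + 1) := by linarith
      have hςle : 2 * ς (j + 1) ≤ (1 / ((j + 1 : ℕ) : ℝ) ^ 2) * d j := by
        have h2 : (0 : ℝ) < ((j + 1 : ℕ) : ℝ) ^ 2 := by positivity
        calc 2 * ς (j + 1) ≤ 2 * ((1 / (2 * ((j + 1 : ℕ) : ℝ) ^ 2)) * d j) := by linarith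
          _ = (1 / ((j + 1 : ℕ) : ℝ) ^ 2) * d j := by field_simp
      calc (1 - 1 / ((j + 1 : ℕ) : ℝ) ^ 2) * d j
          = d j - (1 / ((j + 1 : ℕ) : ℝ) ^ 2) * d j := by ring
        _ ≤ d j - 2 * ς (j + 1) := by linarith
        _ ≤ d (j + 1) := hd2
    -- induction: quantitative lower bound
    set L : ℝ := ((j₀ : ℝ) - 1) / (j₀ : ℝ) with hLdef
    have hLpos : 0 < L := by
      apply div_pos <;> linarith
    have hind : ∀ k : ℕ,
        (∏ i ∈ Finset.range k, (1 - 1 / (((i + (j₀ + 1) : ℕ)) : ℝ) ^ 2)) * d j₀ ≤ d (j₀ + k) := by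
      intro k
      induction k with
      | zero => simp
      | succ k ih =>
        rw [Finset.prod_range_succ]
        have hfac : 0 < 1 - 1 / (((k + (j₀ + 1) : ℕ)) : ℝ) ^ 2 :=
          aux_term_pos (j₀ + 1) (le_trans hj₀2 (Nat.le_succ _)) k
        have hstep' := hstep (j₀ + k) (Nat.le_add_right _ _)
        have hcast : ((j₀ + k + 1 : ℕ) : ℝ) = ((k + (j₀ + 1) : ℕ) : ℝ) := by
          push_cast; ring
        rw [hcast] at hstep'
        have hprodnn : 0 ≤ ∏ i ∈ Finset.range k, (1 - 1 / (((i + (j₀ + 1) : ℕ)) : ℝ) ^ 2) :=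
          Finset.prod_nonneg fun i _ => le_of_lt (aux_term_pos (j₀ + 1) (le_trans hj₀2 (Nat.le_succ _)) i)
        calc (∏ i ∈ Finset.range k, (1 - 1 / (((i + (j₀ + 1) : ℕ)) : ℝ) ^ 2))
              * (1 - 1 / (((k + (j₀ + 1) : ℕ)) : ℝ) ^ 2) * d j₀
            = (1 - 1 / (((k + (j₀ + 1) : ℕ)) : ℝ) ^ 2)
              * ((∏ i ∈ Finset.range k, (1 - 1 / (((i + (j₀ + 1) : ℕ)) : ℝ) ^ 2)) * d j₀) := by
              ring
          _ ≤ (1 - 1 / (((k + (j₀ + 1) : ℕ)) : ℝ) ^ 2) * d (j₀ + k) :=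
              mul_le_mul_of_nonneg_left ih (le_of_lt hfac)
          _ ≤ d (j₀ + k + 1) := hstep'
          _ = d (j₀ + (k + 1)) := by ring_nf
    -- product lower bound L
    have hprodge : ∀ k : ℕ,
        L ≤ ∏ i ∈ Finset.range k, (1 - 1 / (((i + (j₀ + 1) : ℕ)) : ℝ) ^ 2) := by
      intro k
      rw [aux_prod_closed (j₀ + 1) (le_trans hj₀2 (Nat.le_succ _)) k]
      push_cast
      rw [hLdef]
      have hk : (0 : ℝ) ≤ (k : ℝ) := Nat.cast_nonneg k
      rw [div_mul_div_comm, div_le_div_iff₀ (by linarith) (by nlinarith)]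
      nlinarith
    have hbound : ∀ j : ℕ, j₀ ≤ j → L * d j₀ ≤ d j := by
      intro j hj
      obtain ⟨k, rfl⟩ := Nat.exists_eq_add_of_le hj
      calc L * d j₀ ≤ (∏ i ∈ Finset.range k, (1 - 1 / (((i + (j₀ + 1) : ℕ)) : ℝ) ^ 2)) * d j₀ :=
            mul_le_mul_of_nonneg_right (hprodge k) (le_of_lt hdpos)
        _ ≤ d (j₀ + k) := hind k
    -- pass to the limit
    have htend : Tendsto (fun j => d j) atTop (𝓝 ‖F p - F q‖) := by
      have hp := hconv.tendsto_at p
      have hq := hconv.tendsto_at q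
      exact (hp.sub hq).norm
    have hF : L * d j₀ ≤ ‖F p - F q‖ :=
      ge_of_tendsto htend (eventually_atTop.mpr ⟨j₀, hbound⟩)
    have hFpos : 0 < ‖F p - F q‖ := lt_of_lt_of_le (by positivity) hF
    refine ⟨j₀, hj₀1, hdist, ?_, hFpos⟩
    rw [aux_tprod_eq j₀ hj₀2]
    exact hF
  refine ⟨?_, main⟩
  intro a b hab
  by_contra hne
  obtain ⟨j₀, -, -, -, hpos⟩ := main a b hne
  rw [hab] at hpos
  simp at hpos
end
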